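/- arXiv:1507.01767 — 2 statements merged into one kernel-verified Lean document; each statement's English description precedes it below -/
import Mathlib

section
/- The closest-pair distance of a finite planar point set split by a vertical line equals the minimum of: the closest-pair distance within the left part, the closest-pair distance within the right part, and the minimum distance between a left point and a right point that both lie within horizontal distance δ of the line, where δ is the minimum of the two within-part closest-pair distances. -/
open scoped ENNReal Classical

/-- closest-pair "distance" of a finite set, as an extended nonneg real
(⊤ if there is no pair of distinct points). -/
noncomputable def closestPairDist (S : Finset (EuclideanSpace ℝ (Fin 2))) : ℝ≥0∞ :=
  ⨅ p ∈ S, ⨅ q ∈ S, ⨅ _ : p ≠ q, edist p q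

lemma cp_le_edist {S : Finset (EuclideanSpace ℝ (Fin 2))} {p q : EuclideanSpace ℝ (Fin 2)}
    (hp : p ∈ S) (hq : q ∈ S) (hne : p ≠ q) : closestPairDist S ≤ edist p q := by
  unfold closestPairDist
  exact (iInf₂_le p hp).trans ((iInf₂_le q hq).trans (iInf_le _ hne))

lemma cp_mono {S T : Finset (EuclideanSpace ℝ (Fin 2))} (h : S ⊆ T) :
    closestPairDist T ≤ closestPairDist S :=
  le_iInf₂ fun p hp => le_iInf₂ fun q hq => le_iInf fun hne => cp_le_edist (h hp) (h hq) hne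

lemma abs_sub_le_edist (p q : EuclideanSpace ℝ (Fin 2)) :
    ENNReal.ofReal |p 0 - q 0| ≤ edist p q := by
  rw [edist_dist]
  apply ENNReal.ofReal_le_ofReal
  have h1 : |p 0 - q 0| = Real.sqrt (dist (p 0) (q 0) ^ 2) := by
    rw [Real.sqrt_sq_eq_abs, Real.dist_eq, abs_abs]
  rw [h1, EuclideanSpace.dist_eq]
  apply Real.sqrt_le_sqrt
  exact Finset.single_le_sum (f := fun i => dist (p i) (q i) ^ 2)
    (fun i _ => sq_nonneg _) (Finset.mem_univ 0)

theorem closest_pair_divide_and_conquer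
    (P : Finset (EuclideanSpace ℝ (Fin 2))) (c : ℝ)
    (L R M : Finset (EuclideanSpace ℝ (Fin 2)))
    (hL : L = P.filter (fun p => p 0 ≤ c))
    (hR : R = P.filter (fun p => c < p 0))
    (hLcard : 2 ≤ L.card) (hRcard : 2 ≤ R.card)
    (δ : ℝ≥0∞) (hδ : δ = min (closestPairDist L) (closestPairDist R))
    (hM : M = P.filter (fun p => ENNReal.ofReal |p 0 - c| < δ)) :
    closestPairDist P =
      min δ (⨅ p ∈ M ∩ L, ⨅ q ∈ M ∩ R, edist p q) := by
  have hLP : L ⊆ P := by rw [hL]; exact Finset.filter_subset _ _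
  have hRP : R ⊆ P := by rw [hR]; exact Finset.filter_subset _ _
  have hMP : M ⊆ P := by rw [hM]; exact Finset.filter_subset _ _
  have hLR : ∀ {p q : EuclideanSpace ℝ (Fin 2)}, p ∈ L → q ∈ R → p ≠ q := by
    intro p q hp hq h
    rw [hL, Finset.mem_filter] at hp
    rw [hR, Finset.mem_filter] at hq
    exact absurd (h ▸ hp.2) (not_le.mpr hq.2)
  apply le_antisymm
  · refine le_min ?_ ?_
    · rw [hδ]
      exact le_min (cp_mono hLP) (cp_mono hRP)
    · refine le_iInf₂ fun p hp => le_iInf₂ fun q hq => ?_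
      rw [Finset.mem_inter] at hp hq
      exact cp_le_edist (hLP hp.2) (hRP hq.2) (hLR hp.2 hq.2)
  · refine le_iInf₂ fun p hp => le_iInf₂ fun q hq => le_iInf fun hne => ?_
    have hcase : ∀ r ∈ P, r ∈ L ∨ r ∈ R := by
      intro r hr
      rcases le_or_gt (r 0) c with h | h
      · exact Or.inl (by rw [hL, Finset.mem_filter]; exact ⟨hr, h⟩)
      · exact Or.inr (by rw [hR, Finset.mem_filter]; exact ⟨hr, h⟩)
    have key : ∀ a b : EuclideanSpace ℝ (Fin 2), a ∈ L → b ∈ R → a ≠ b →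
        min δ (⨅ p ∈ M ∩ L, ⨅ q ∈ M ∩ R, edist p q) ≤ edist a b := by
      intro a b ha hb hab
      rcases le_or_gt δ (edist a b) with h | h
      · exact (min_le_left _ _).trans h
      · have haL := ha; have hbR := hb
        rw [hL, Finset.mem_filter] at ha
        rw [hR, Finset.mem_filter] at hb
        have hax : |a 0 - c| ≤ |a 0 - b 0| := by
          rw [abs_sub_comm, abs_of_nonneg (by linarith [ha.2] : (0:ℝ) ≤ c - a 0),
            abs_sub_comm, abs_of_nonneg (by linarith [ha.2, hb.2] : (0:ℝ) ≤ b 0 - a 0)]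
          linarith [hb.2]
        have hbx : |b 0 - c| ≤ |a 0 - b 0| := by
          rw [abs_of_nonneg (by linarith [hb.2] : (0:ℝ) ≤ b 0 - c),
            abs_sub_comm, abs_of_nonneg (by linarith [ha.2, hb.2] : (0:ℝ) ≤ b 0 - a 0)]
          linarith [ha.2]
        have haM : a ∈ M := by
          rw [hM, Finset.mem_filter]
          exact ⟨ha.1, lt_of_le_of_lt ((ENNReal.ofReal_le_ofReal hax).trans
            (abs_sub_le_edist a b)) h⟩
        have hbM : b ∈ M := by
          rw [hM, Finset.mem_filter]
          refine ⟨hb.1, lt_of_le_of_lt ((ENNReal.ofReal_le_ofReal hbx).trans ?_) h⟩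
          rw [abs_sub_comm]
          exact abs_sub_le_edist b a |>.trans_eq (edist_comm b a)
        refine (min_le_right _ _).trans ?_
        exact (iInf₂_le a (Finset.mem_inter.mpr ⟨haM, haL⟩)).trans
          (iInf₂_le b (Finset.mem_inter.mpr ⟨hbM, hbR⟩))
    rcases hcase p hp with hpL | hpR <;> rcases hcase q hq with hqL | hqR
    · exact (min_le_left _ _).trans ((hδ ▸ min_le_left _ _).trans (cp_le_edist hpL hqL hne))
    · exact key p q hpL hqR hne
    · exact (key q p hqL hpR hne.symm).trans_eq (edist_comm q p)
    · exact (min_le_left _ _).trans ((hδ ▸ min_le_right _ _).trans (cp_le_edist hpR hqR hne))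
end

section
/- For any real c, y₀ and any δ > 0, any set of points contained in the rectangle [c−δ, c+δ] × [y₀, y₀+δ] whose pairwise distances within each vertical half (x ≤ c, respectively x ≥ c) are at least δ contains at most 8 points. -/
lemma four_in_square (a b δ : ℝ) (hδ : 0 < δ)
    (T : Finset (EuclideanSpace ℝ (Fin 2)))
    (hT : ∀ p ∈ T, p 0 ∈ Set.Icc a (a + δ) ∧ p 1 ∈ Set.Icc b (b + δ))
    (hsep : ∀ p ∈ T, ∀ q ∈ T, p ≠ q → δ ≤ dist p q) :
    T.card ≤ 4 := by
  have key : ∀ p ∈ T, ∀ q ∈ T,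
      (decide (a + δ/2 ≤ p 0), decide (b + δ/2 ≤ p 1)) =
      (decide (a + δ/2 ≤ q 0), decide (b + δ/2 ≤ q 1)) → p = q := by
    intro p hp q hq hfq
    by_contra hne
    have hd := hsep p hp q hq hne
    obtain ⟨⟨hpx1, hpx2⟩, hpy1, hpy2⟩ := hT p hp
    obtain ⟨⟨hqx1, hqx2⟩, hqy1, hqy2⟩ := hT q hq
    have h1 : decide (a + δ/2 ≤ p 0) = decide (a + δ/2 ≤ q 0) := by
      simpa using congrArg Prod.fst hfq
    have h2 : decide (b + δ/2 ≤ p 1) = decide (b + δ/2 ≤ q 1) := by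
      simpa using congrArg Prod.snd hfq
    have hx : (p 0 - q 0)^2 ≤ (δ/2)^2 := by
      rcases le_or_gt (a + δ/2) (p 0) with h | h
      · have : a + δ/2 ≤ q 0 := by
          by_contra hcon
          simp [h, hcon] at h1
        have := sq_abs (p 0 - q 0)
        nlinarith [abs_nonneg (p 0 - q 0)]
      · have : ¬ (a + δ/2 ≤ q 0) := by
          by_contra hcon
          simp [not_le.mpr h, hcon] at h1
        push_neg at this
        nlinarith
    have hy : (p 1 - q 1)^2 ≤ (δ/2)^2 := by
      rcases le_or_gt (b + δ/2) (p 1) with h | h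
      · have : b + δ/2 ≤ q 1 := by
          by_contra hcon
          simp [h, hcon] at h2
        nlinarith
      · have : ¬ (b + δ/2 ≤ q 1) := by
          by_contra hcon
          simp [not_le.mpr h, hcon] at h2
        push_neg at this
        nlinarith
    have hdist : dist p q ^ 2 = (p 0 - q 0)^2 + (p 1 - q 1)^2 := by
      rw [EuclideanSpace.dist_eq, Real.sq_sqrt (by positivity)]
      simp [Fin.sum_univ_two, Real.dist_eq, sq_abs]
    nlinarith [dist_nonneg (x := p) (y := q)]
  calc T.card ≤ (Finset.univ : Finset (Bool × Bool)).card :=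
        Finset.card_le_card_of_injOn
          (fun p => (decide (a + δ/2 ≤ p 0), decide (b + δ/2 ≤ p 1)))
          (fun _ _ => Finset.mem_univ _)
          (fun p hp q hq h => key p hp q hq h)
    _ = 4 := by simp

theorem at_most_eight_points_near_separator (c y₀ δ : ℝ) (hδ : 0 < δ)
    (S : Finset (EuclideanSpace ℝ (Fin 2)))
    (hS : ∀ p ∈ S, p 0 ∈ Set.Icc (c - δ) (c + δ) ∧ p 1 ∈ Set.Icc y₀ (y₀ + δ))
    (hleft : ∀ p ∈ S, ∀ q ∈ S, p ≠ q → p 0 ≤ c → q 0 ≤ c → δ ≤ dist p q)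
    (hright : ∀ p ∈ S, ∀ q ∈ S, p ≠ q → c ≤ p 0 → c ≤ q 0 → δ ≤ dist p q) :
    S.card ≤ 8 := by
  classical
  set L := S.filter (fun p => p 0 ≤ c) with hL
  set R := S.filter (fun p => c ≤ p 0) with hR
  have hsub : S ⊆ L ∪ R := by
    intro p hp
    rcases le_total (p 0) c with h | h
    · exact Finset.mem_union_left _ (Finset.mem_filter.mpr ⟨hp, h⟩)
    · exact Finset.mem_union_right _ (Finset.mem_filter.mpr ⟨hp, h⟩)
  have hLcard : L.card ≤ 4 := by
    apply four_in_square (c - δ) y₀ δ hδ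
    · intro p hp
      obtain ⟨hpS, hpc⟩ := Finset.mem_filter.mp hp
      obtain ⟨⟨h1, _⟩, h2⟩ := hS p hpS
      exact ⟨⟨h1, by linarith⟩, h2⟩
    · intro p hp q hq hne
      obtain ⟨hpS, hpc⟩ := Finset.mem_filter.mp hp
      obtain ⟨hqS, hqc⟩ := Finset.mem_filter.mp hq
      exact hleft p hpS q hqS hne hpc hqc
  have hRcard : R.card ≤ 4 := by
    apply four_in_square c y₀ δ hδ
    · intro p hp
      obtain ⟨hpS, hpc⟩ := Finset.mem_filter.mp hp
      obtain ⟨⟨_, h1⟩, h2⟩ := hS p hpS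
      exact ⟨⟨hpc, h1⟩, h2⟩
    · intro p hp q hq hne
      obtain ⟨hpS, hpc⟩ := Finset.mem_filter.mp hp
      obtain ⟨hqS, hqc⟩ := Finset.mem_filter.mp hq
      exact hright p hpS q hqS hne hpc hqc
  calc S.card ≤ (L ∪ R).card := Finset.card_le_card hsub
    _ ≤ L.card + R.card := Finset.card_union_le _ _
    _ ≤ 8 := by omega
end
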